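/- arXiv:2509.03178 — 4 statements merged into one kernel-verified Lean document; each statement's English description precedes it below -/
import Mathlib

section
/- Applying the operator ((1 - ∂_x/2) ∘ ∑_{r=0}^{n} (-∂_x/2)^r) to x^n gives e_n(x, -1/2) - (n/2)·e_{n-1}(x, -1/2), where e_n(x,y) = n! ∑_{r=0}^{n} x^{n-r} y^r/(n-r)!. -/
open Finset

/-- First-order two-variable truncated exponential polynomials. -/
noncomputable def truncExp (n : ℕ) (x y : ℝ) : ℝ :=
  (n.factorial : ℝ) *
    ∑ r ∈ range (n + 1), x ^ (n - r) * y ^ r / ((n - r).factorial : ℝ)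

/-!
Since `∂ₓ^r x^n = n(n-1)⋯(n-r+1) x^(n-r)`, the operator `∑_r (y ∂ₓ)^r` sends `x^n` to `e_n(x, y)`,
and the `e_n(·, y)` form an Appell sequence: `∂ₓ e_n = n e_{n-1}`. Applying `1 - ∂ₓ/2` finishes.
-/

lemma Nat.descFactorial_mul_sub (n r : ℕ) :
    n.descFactorial r * (n - r) = n * (n - 1).descFactorial r := by
  cases n with
  | zero => simp
  | succ m =>
    rw [mul_comm, ← Nat.descFactorial_succ, Nat.succ_descFactorial_succ, Nat.add_sub_cancel]

/-- The range may be any `N ≥ n`, since `n.descFactorial r = 0` for `r > n`; this lets `e_{n-1}`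
be summed over the same range as `e_n`. -/
lemma truncExp_eq_sum_descFactorial {n N : ℕ} (hnN : n ≤ N) (x y : ℝ) :
    truncExp n x y = ∑ r ∈ range (N + 1), (n.descFactorial r : ℝ) * x ^ (n - r) * y ^ r := by
  have hvanish : ∀ r ∈ range (N + 1), r ∉ range (n + 1) →
      (n.descFactorial r : ℝ) * x ^ (n - r) * y ^ r = 0 := fun r _ hr => by
    rw [Nat.descFactorial_eq_zero_iff_lt.mpr (by simpa using hr)]
    simp
  rw [← sum_subset (range_subset_range.mpr (by omega)) hvanish, truncExp, mul_sum]
  refine sum_congr rfl fun r hr => ?_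
  have hfact : (n.factorial : ℝ) = (n - r).factorial * n.descFactorial r := by
    exact_mod_cast (Nat.factorial_mul_descFactorial (by simpa [Nat.lt_succ_iff] using hr)).symm
  rw [hfact]
  field_simp

lemma sum_iteratedDeriv_pow_eq_truncExp (n : ℕ) (y : ℝ) :
    (fun x : ℝ => ∑ r ∈ range (n + 1), y ^ r * iteratedDeriv r (fun t : ℝ => t ^ n) x) =
      fun x => truncExp n x y := by
  funext x
  rw [truncExp_eq_sum_descFactorial le_rfl]
  refine sum_congr rfl fun r _ => ?_
  rw [iteratedDeriv_pow]
  ring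

lemma hasDerivAt_truncExp (n : ℕ) (x y : ℝ) :
    HasDerivAt (fun x => truncExp n x y) (n * truncExp (n - 1) x y) x := by
  have hsum : HasDerivAt (fun x => ∑ r ∈ range (n + 1), (n.descFactorial r : ℝ) * x ^ (n - r) * y ^ r)
      (∑ r ∈ range (n + 1), (n.descFactorial r : ℝ) * ((n - r : ℕ) * x ^ (n - r - 1)) * y ^ r) x :=
    HasDerivAt.fun_sum fun r _ => ((hasDerivAt_pow (n - r) x).const_mul _).mul_const _
  convert hsum using 1
  · exact funext fun x => truncExp_eq_sum_descFactorial le_rfl x y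
  rw [truncExp_eq_sum_descFactorial (Nat.sub_le n 1), mul_sum]
  refine sum_congr rfl fun r _ => ?_
  have hcoeff : (n.descFactorial r : ℝ) * (n - r : ℕ) = n * (n - 1).descFactorial r := by
    exact_mod_cast Nat.descFactorial_mul_sub n r
  rw [Nat.sub_right_comm n r 1]
  linear_combination (-(x ^ (n - 1 - r) * y ^ r)) * hcoeff

/-- Applying `(1 - ∂_x/2) ∘ ∑_{r=0}^{n} (-∂_x/2)^r` to `x^n` gives
`e_n(x,-1/2) - (n/2) e_{n-1}(x,-1/2)`. -/
theorem pade11_H1_eq (n : ℕ) (x : ℝ) :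
    (fun x : ℝ => ∑ r ∈ range (n + 1),
        (-(1 / 2) : ℝ) ^ r * iteratedDeriv r (fun t : ℝ => t ^ n) x) x -
      (1 / 2) * deriv (fun x : ℝ => ∑ r ∈ range (n + 1),
        (-(1 / 2) : ℝ) ^ r * iteratedDeriv r (fun t : ℝ => t ^ n) x) x =
    truncExp n x (-(1 / 2)) - ((n : ℝ) / 2) * truncExp (n - 1) x (-(1 / 2)) := by
  rw [sum_iteratedDeriv_pow_eq_truncExp, (hasDerivAt_truncExp n x _).deriv]
  ring
end

section
/- Applying the operator ∑_{r≥0} U_r(1/2, 1/8) ∂_x^{2r} to x^n yields n! ∑_{r=0}^{⌊n/2⌋} U_r(1/2, 1/8) x^{n-2r}/(n-2r)!, and this polynomial equals (1/(1 + (1/2)∂_x² + (1/8)∂_x⁴)){x^n}, i.e., (1 + (1/2)∂_x² + (1/8)∂_x⁴) applied to it returns x^n. -/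
open Finset

noncomputable def U2 (n : ℕ) (x y : ℝ) : ℝ :=
  (-1 : ℝ) ^ n *
    ∑ r ∈ range (n / 2 + 1),
      ((n - r).factorial : ℝ) * x ^ (n - 2 * r) * (-y) ^ r /
        (((n - 2 * r).factorial : ℝ) * (r.factorial : ℝ))

/-!
Since `(n - r)! / ((n - 2r)! r!) = C(n - r, r)`, `(-1)^n U_n(x, y)` is the bivariate Fibonacci
polynomial `∑ C(n - r, r) x^(n - 2r) (-y)^r`, so Pascal's rule gives
`U_{n+2} = -x U_{n+1} - y U_n` with `U_0 = 1`, `U_1 = -x`. For `(x, y) = (1/2, 1/8)` this says that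
`∑ U_r t^r = 1 / (1 + t/2 + t²/8)`, so applying `1 + ∂²/2 + ∂⁴/8` to `∑ U_r ∂^{2r} xⁿ` telescopes to
`xⁿ`, up to terms `∂^{2r} xⁿ` with `2r > n`, which vanish.
-/

open scoped ContDiff

section FibonacciPolynomial

variable {R : Type*} [CommSemiring R]

def fibonacciPoly (x z : R) (n : ℕ) : R :=
  ∑ r ∈ range (n + 1), ((n - r).choose r : R) * x ^ (n - 2 * r) * z ^ r

theorem fibonacciPoly_add_two (x z : R) (n : ℕ) :
    fibonacciPoly x z (n + 2) = x * fibonacciPoly x z (n + 1) + z * fibonacciPoly x z n := by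
  set t : ℕ → ℕ → R := fun m r => ((m - r).choose r : R) * x ^ (m - 2 * r) * z ^ r with ht
  have vanish {m r : ℕ} (h : m < 2 * r) : t m r = 0 := by
    simp [ht, Nat.choose_eq_zero_of_lt (by omega : m - r < r)]
  have pascal (r : ℕ) : t (n + 2) (r + 1) = x * t (n + 1) (r + 1) + z * t n r := by
    rcases lt_trichotomy n (2 * r) with h | rfl | h
    · simp [vanish h, vanish (by omega : n + 2 < 2 * (r + 1)),
        vanish (by omega : n + 1 < 2 * (r + 1))]
    · rw [vanish (by omega : 2 * r + 1 < 2 * (r + 1))]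
      simp [ht, show 2 * r + 2 - (r + 1) = r + 1 by omega, show 2 * r - r = r by omega,
        show 2 * r + 2 - 2 * (r + 1) = 0 by omega, pow_succ']
    · obtain ⟨j, rfl⟩ : ∃ j, n = 2 * r + 1 + j := ⟨n - (2 * r + 1), by omega⟩
      simp only [ht, show 2 * r + 1 + j + 2 - (r + 1) = (r + j + 1) + 1 by omega,
        show 2 * r + 1 + j + 1 - (r + 1) = r + j + 1 by omega,
        show 2 * r + 1 + j - r = r + j + 1 by omega,
        show 2 * r + 1 + j + 2 - 2 * (r + 1) = j + 1 by omega,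
        show 2 * r + 1 + j + 1 - 2 * (r + 1) = j by omega,
        show 2 * r + 1 + j - 2 * r = j + 1 by omega, Nat.choose_succ_succ', Nat.cast_add]
      ring
  have sum_eq (m : ℕ) : fibonacciPoly x z m = ∑ r ∈ range (m + 1), t m r := rfl
  rw [sum_eq, sum_eq, sum_eq, sum_range_succ', sum_range_succ' (t (n + 1))]
  simp only [pascal, sum_add_distrib, ← mul_sum]
  rw [sum_range_succ (fun r => t (n + 1) (r + 1)), sum_range_succ (t n),
    vanish (by omega : n + 1 < 2 * (n + 1 + 1)), vanish (by omega : n < 2 * (n + 1))]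
  simp only [ht, Nat.reduceSubDiff, pow_succ, add_zero, tsub_zero, Nat.choose_zero_right,
    Nat.cast_one, mul_zero, one_mul, pow_zero, mul_one]
  ring

end FibonacciPolynomial

theorem U2_eq_fibonacciPoly (n : ℕ) (x y : ℝ) :
    U2 n x y = (-1) ^ n * fibonacciPoly x (-y) n := by
  rw [U2, fibonacciPoly, ← sum_subset (range_subset_range.2 (by omega : n / 2 + 1 ≤ n + 1))]
  · congr 1
    refine sum_congr rfl fun r hr => ?_
    rw [mem_range] at hr
    rw [Nat.cast_choose ℝ (by omega : r ≤ n - r), show n - r - r = n - 2 * r by omega]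
    ring
  · intro r _ hr
    rw [mem_range] at hr
    simp [Nat.choose_eq_zero_of_lt (by omega : n - r < r)]

theorem U2_zero (x y : ℝ) : U2 0 x y = 1 := by simp [U2]

theorem U2_one (x y : ℝ) : U2 1 x y = -x := by simp [U2]

theorem U2_add_two (n : ℕ) (x y : ℝ) :
    U2 (n + 2) x y = -x * U2 (n + 1) x y - y * U2 n x y := by
  simp only [U2_eq_fibonacciPoly, fibonacciPoly_add_two]
  ring

/-- The hypotheses say `∑ c_r t^r = 1 / (1 + a t + b t²)`; with `E` the shift `u r ↦ u (r + 1)`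
the identity reads `(1 + a E + b E²) ∑_{r ≤ N} c_r E^r = 1 - c_{N+1} E^{N+1} + b c_N E^{N+2}`. -/
theorem sum_smul_add_smul_add_smul_of_recurrence {R M : Type*} [CommRing R] [AddCommGroup M]
    [Module R M] {a b : R} {c : ℕ → R} (h0 : c 0 = 1) (h1 : c 1 = -a)
    (hrec : ∀ r, c (r + 2) = -a * c (r + 1) - b * c r) (u : ℕ → M) (N : ℕ) :
    ∑ r ∈ range (N + 1), c r • u r + a • ∑ r ∈ range (N + 1), c r • u (r + 1)
        + b • ∑ r ∈ range (N + 1), c r • u (r + 2) =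
      u 0 - c (N + 1) • u (N + 1) + (b * c N) • u (N + 2) := by
  induction N with
  | zero =>
    simp only [zero_add, sum_range_one, h0, h1, one_smul]
    module
  | succ N ih =>
    rw [sum_range_succ, sum_range_succ _ (N + 1), sum_range_succ _ (N + 1), smul_add, smul_add,
      hrec]
    linear_combination (norm := module) ih

theorem iteratedDeriv_sum_mul_iteratedDeriv {𝕜 ι : Type*} [NontriviallyNormedField 𝕜]
    {f : 𝕜 → 𝕜} (hf : ContDiff 𝕜 ∞ f) (s : Finset ι) (c : ι → 𝕜) (j : ι → ℕ) (k : ℕ) (x : 𝕜) :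
    iteratedDeriv k (fun y => ∑ i ∈ s, c i * iteratedDeriv (j i) f y) x =
      ∑ i ∈ s, c i * iteratedDeriv (j i + k) f x := by
  rw [iteratedDeriv_fun_sum fun i _ => ?_]
  · refine sum_congr rfl fun i _ => ?_
    rw [iteratedDeriv_const_mul_field, iteratedDeriv_eq_iterate, iteratedDeriv_eq_iterate,
      iteratedDeriv_eq_iterate, ← Function.iterate_add_apply, add_comm]
  · rw [iteratedDeriv_eq_iterate]
    exact (contDiff_const.mul (hf.iterate_deriv _)).contDiffAt.of_le (by exact_mod_cast le_top)

section PowDerivatives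

variable {𝕜 : Type*} [NontriviallyNormedField 𝕜]

theorem iteratedDeriv_pow_of_lt {n k : ℕ} (h : n < k) (x : 𝕜) :
    iteratedDeriv k (fun t : 𝕜 => t ^ n) x = 0 := by
  simp [Nat.descFactorial_eq_zero_iff_lt.2 h]

theorem iteratedDeriv_pow_of_le [CharZero 𝕜] {n k : ℕ} (h : k ≤ n) (x : 𝕜) :
    iteratedDeriv k (fun t : 𝕜 => t ^ n) x = n.factorial / (n - k).factorial * x ^ (n - k) := by
  rw [iteratedDeriv_pow, ← Nat.factorial_mul_descFactorial h, Nat.cast_mul,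
    mul_div_cancel_left₀ _ (Nat.cast_ne_zero.2 (Nat.factorial_ne_zero _))]

theorem sum_mul_iteratedDeriv_two_mul_pow [CharZero 𝕜] (c : ℕ → 𝕜) (n : ℕ) (x : 𝕜) :
    ∑ r ∈ range (n + 1), c r * iteratedDeriv (2 * r) (fun t : 𝕜 => t ^ n) x =
      n.factorial * ∑ r ∈ range (n / 2 + 1), c r * x ^ (n - 2 * r) / (n - 2 * r).factorial := by
  rw [mul_sum, ← sum_subset (range_subset_range.2 (by omega : n / 2 + 1 ≤ n + 1))]
  · refine sum_congr rfl fun r hr => ?_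
    rw [iteratedDeriv_pow_of_le (by rw [mem_range] at hr; omega)]
    ring
  · intro r _ hr
    rw [mem_range] at hr
    rw [iteratedDeriv_pow_of_lt (by omega), mul_zero]

end PowDerivatives

/-- Applying `∑_{r≥0} U_r(1/2,1/8) ∂_x^{2r}` to `x^n` yields
`n! ∑_{r=0}^{⌊n/2⌋} U_r(1/2,1/8) x^{n-2r}/(n-2r)!`, and applying
`1 + (1/2)∂_x² + (1/8)∂_x⁴` to the result returns `x^n`. -/
theorem pade02_He_eq (n : ℕ) :
    (∀ x : ℝ,
      (∑ r ∈ range (n + 1),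
          U2 r (1 / 2) (1 / 8) * iteratedDeriv (2 * r) (fun t : ℝ => t ^ n) x) =
        (n.factorial : ℝ) *
          ∑ r ∈ range (n / 2 + 1),
            U2 r (1 / 2) (1 / 8) * x ^ (n - 2 * r) / ((n - 2 * r).factorial : ℝ)) ∧
    (∀ x : ℝ,
      (fun x : ℝ => ∑ r ∈ range (n + 1),
          U2 r (1 / 2) (1 / 8) * iteratedDeriv (2 * r) (fun t : ℝ => t ^ n) x) x +
        (1 / 2) * iteratedDeriv 2 (fun x : ℝ => ∑ r ∈ range (n + 1),
          U2 r (1 / 2) (1 / 8) * iteratedDeriv (2 * r) (fun t : ℝ => t ^ n) x) x +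
        (1 / 8) * iteratedDeriv 4 (fun x : ℝ => ∑ r ∈ range (n + 1),
          U2 r (1 / 2) (1 / 8) * iteratedDeriv (2 * r) (fun t : ℝ => t ^ n) x) x =
      x ^ n) := by
  refine ⟨sum_mul_iteratedDeriv_two_mul_pow _ n, fun x => ?_⟩
  set u : ℕ → ℝ := fun r => iteratedDeriv (2 * r) (fun t : ℝ => t ^ n) x with hu
  have telescope := sum_smul_add_smul_add_smul_of_recurrence
    (c := fun r => U2 r (1 / 2) (1 / 8)) (U2_zero _ _) (U2_one _ _) (fun r => U2_add_two r _ _) u n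
  have hu₁ : u (n + 1) = 0 := iteratedDeriv_pow_of_lt (by omega) x
  have hu₂ : u (n + 2) = 0 := iteratedDeriv_pow_of_lt (by omega) x
  simp only [smul_eq_mul, hu₁, hu₂, mul_zero, sub_zero, add_zero] at telescope
  have hpow : ContDiff ℝ ∞ fun t : ℝ => t ^ n := contDiff_id.pow n
  rw [iteratedDeriv_sum_mul_iteratedDeriv hpow, iteratedDeriv_sum_mul_iteratedDeriv hpow]
  calc _ = ∑ r ∈ range (n + 1), U2 r (1 / 2) (1 / 8) * u r
        + 1 / 2 * ∑ r ∈ range (n + 1), U2 r (1 / 2) (1 / 8) * u (r + 1)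
        + 1 / 8 * ∑ r ∈ range (n + 1), U2 r (1 / 2) (1 / 8) * u (r + 2) := by
        simp only [hu, mul_add, mul_one, Nat.reduceMul]
    _ = u 0 := telescope
    _ = x ^ n := by simp [hu]
end

section
/- Let z_n(x) = e_n(x, -1/2) - (n/2)·e_{n-1}(x, -1/2) (the [1|1] Padé approximant of H_n^{(1)}(x,-1)). Then z_n satisfies the third-order ODE x·z_n'''(x) + (2 - n)·z_n''(x) + 4(1 - x)·z_n'(x) + 4n·z_n(x) = 0. -/
/-!
At `y = -1/2` the recurrence `e_n = x^n + n y e_{n-1}` and the Appell property `e_n' = n e_{n-1}`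
give `z_n = 2 e_n - x^n` and `e_n' = 2 (x^n - e_n)`. The operator of the equation factors as
`L = M (D + 2)` with `M = x D² + (2 - n - 2x) D + 2n`, and `(D + 2) z_n = -(D - 2) x^n`.
Since `M (D - 2) = (D - 2)² (x D - n)` and `x (x^n)' = n x^n`, this gives `L z_n = 0`.
-/

open Finset

@[simp]
lemma truncExp_zero (x y : ℝ) : truncExp 0 x y = 1 := by simp [truncExp]

lemma truncExp_succ (n : ℕ) (x y : ℝ) :
    truncExp (n + 1) x y = x ^ (n + 1) + (n + 1) * y * truncExp n x y := by
  rw [truncExp, sum_range_succ', truncExp, mul_add, add_comm, mul_sum, mul_sum, mul_sum]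
  congr 1
  · simp only [Nat.sub_zero, pow_zero, mul_one]
    exact mul_div_cancel₀ _ (by positivity)
  · refine sum_congr rfl fun r _ => ?_
    rw [Nat.add_sub_add_right, Nat.factorial_succ]
    push_cast
    ring

lemma truncExp_eq_pow_add (n : ℕ) (x y : ℝ) :
    truncExp n x y = x ^ n + n * y * truncExp (n - 1) x y := by
  cases n with
  | zero => simp
  | succ n => push_cast [truncExp_succ, Nat.add_sub_cancel]; rfl

lemma contDiff_truncExp (n : ℕ) (y : ℝ) {m : WithTop ℕ∞} :
    ContDiff ℝ m (fun x => truncExp n x y) := by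
  unfold truncExp
  fun_prop

lemma hasDerivAt_truncExp_succ (n : ℕ) (x y : ℝ) :
    HasDerivAt (fun x => truncExp (n + 1) x y) ((n + 1) * truncExp n x y) x := by
  induction n with
  | zero => simpa [truncExp_succ] using (hasDerivAt_id x).add_const y
  | succ n ih =>
    have hrec : (fun x => truncExp (n + 2) x y) =
        fun x => x ^ (n + 2) + ((n : ℝ) + 2) * y * truncExp (n + 1) x y := by
      funext x
      push_cast [truncExp_succ (n + 1)]
      ring
    rw [hrec]
    refine ((hasDerivAt_pow (n + 2) x).fun_add (ih.const_mul _)).congr_deriv ?_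
    push_cast [truncExp_succ n]
    ring

lemma mul_deriv_truncExp (n : ℕ) (x y : ℝ) :
    y * deriv (fun x => truncExp n x y) x = truncExp n x y - x ^ n := by
  cases n with
  | zero => simp
  | succ n => rw [(hasDerivAt_truncExp_succ n x y).deriv, truncExp_succ]; ring

lemma mul_iteratedDeriv_succ_truncExp (n k : ℕ) (x y : ℝ) :
    y * iteratedDeriv (k + 1) (fun x => truncExp n x y) x =
      iteratedDeriv k (fun x => truncExp n x y) x - iteratedDeriv k (· ^ n) x := by
  rw [iteratedDeriv_succ', ← iteratedDeriv_const_mul_field,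
    funext fun x => mul_deriv_truncExp n x y]
  exact iteratedDeriv_fun_sub (contDiff_truncExp n y).contDiffAt (contDiff_id.pow n).contDiffAt

lemma mul_iteratedDeriv_succ_pow {𝕜 : Type*} [NontriviallyNormedField 𝕜] (n k : ℕ) (x : 𝕜) :
    x * iteratedDeriv (k + 1) (· ^ n) x = (n - k) * iteratedDeriv k (· ^ n) x := by
  simp only [iteratedDeriv_pow, Nat.descFactorial_succ]
  obtain hkn | hnk := lt_or_ge k n
  · obtain ⟨m, rfl⟩ := Nat.exists_eq_add_of_lt hkn
    simp only [show k + m + 1 - k = m + 1 by omega, show k + m + 1 - (k + 1) = m by omega]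
    push_cast
    ring
  · obtain rfl | hnk := hnk.eq_or_lt
    · simp
    · simp [Nat.descFactorial_eq_zero_iff_lt.mpr hnk]

/-- The [1|1] Padé approximant `z_n(x) = e_n(x,-1/2) - (n/2) e_{n-1}(x,-1/2)`
satisfies `x z''' + (2-n) z'' + 4(1-x) z' + 4n z = 0`. -/
theorem pade11_H1_ode (n : ℕ) (x : ℝ) :
    x * iteratedDeriv 3
        (fun x : ℝ => truncExp n x (-(1 / 2)) -
          ((n : ℝ) / 2) * truncExp (n - 1) x (-(1 / 2))) x +
      (2 - (n : ℝ)) * iteratedDeriv 2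
        (fun x : ℝ => truncExp n x (-(1 / 2)) -
          ((n : ℝ) / 2) * truncExp (n - 1) x (-(1 / 2))) x +
      4 * (1 - x) * deriv
        (fun x : ℝ => truncExp n x (-(1 / 2)) -
          ((n : ℝ) / 2) * truncExp (n - 1) x (-(1 / 2))) x +
      4 * (n : ℝ) *
        (truncExp n x (-(1 / 2)) - ((n : ℝ) / 2) * truncExp (n - 1) x (-(1 / 2))) = 0 := by
  have hz : (fun x : ℝ => truncExp n x (-(1 / 2)) - ((n : ℝ) / 2) * truncExp (n - 1) x (-(1 / 2)))
      = fun x => 2 * truncExp n x (-(1 / 2)) - x ^ n := by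
    funext x
    linear_combination -truncExp_eq_pow_add n x (-(1 / 2))
  have hz_deriv (k : ℕ) : iteratedDeriv k (fun x => 2 * truncExp n x (-(1 / 2)) - x ^ n) x =
      2 * iteratedDeriv k (fun x => truncExp n x (-(1 / 2))) x - iteratedDeriv k (· ^ n) x := by
    rw [iteratedDeriv_fun_sub (contDiff_const.mul (contDiff_truncExp n _)).contDiffAt
      (by fun_prop), iteratedDeriv_const_mul_field]
  have he (k : ℕ) := mul_iteratedDeriv_succ_truncExp n k x (-(1 / 2))
  have hw (k : ℕ) := mul_iteratedDeriv_succ_pow n k x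
  rw [hz, ← iteratedDeriv_one, hz_deriv, hz_deriv, hz_deriv]
  -- `he k` enter with `-4` times the coefficients of `M`, `hw k` with those of `-(D - 2)²`.
  linear_combination (norm := (simp only [iteratedDeriv_zero]; ring))
    (-4 * x) * he 2 + (8 * x + 4 * n - 8) * he 1 - 8 * n * he 0
      - hw 2 + 4 * hw 1 - 4 * hw 0 - 4 * n * truncExp_eq_pow_add n x (-(1 / 2))
end

section
/- The polynomials Z_n(x) := e_n^{(2)}(x,y) = n! ∑_{r=0}^{⌊n/2⌋} x^{n-2r} y^r/(n-2r)! satisfy, for each fixed real y, the ODE y·x·Z_n'''(x) - n·y·Z_n''(x) - x·Z_n'(x) + n·Z_n(x) = 0. -/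
/-!
Writing `Z_n = e_n^{(2)}(·, y)`, the definition gives `Z_0 = 1`, `Z_1 = x` and the recurrence
`Z_{n+2} = x^{n+2} + (n+2)(n+1) y Z_n`, from which induction yields the Appell property
`Z_n' = n Z_{n-1}`. Together they give `y Z_n'' = Z_n - x^n`; differentiating once more,
`y Z_n''' = Z_n' - n x^{n-1}`, and the equation is `x` times the second identity minus `n` times
the first.
-/

open Finset

/-- Second-order two-variable truncated exponential polynomials. -/
noncomputable def truncExp2 (n : ℕ) (x y : ℝ) : ℝ :=
  (n.factorial : ℝ) *
    ∑ r ∈ range (n / 2 + 1), x ^ (n - 2 * r) * y ^ r / ((n - 2 * r).factorial : ℝ)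

section

variable (x y : ℝ)

@[simp]
lemma truncExp2_zero : truncExp2 0 x y = 1 := by
  simp [truncExp2]

@[simp]
lemma truncExp2_one : truncExp2 1 x y = x := by
  simp [truncExp2]

lemma truncExp2_add_two (n : ℕ) :
    truncExp2 (n + 2) x y = x ^ (n + 2) + (n + 2) * (n + 1) * y * truncExp2 n x y := by
  have hrange : (n + 2) / 2 + 1 = n / 2 + 1 + 1 := by omega
  have hterm (r : ℕ) : x ^ (n + 2 - 2 * (r + 1)) * y ^ (r + 1) / (n + 2 - 2 * (r + 1)).factorial =
      y * (x ^ (n - 2 * r) * y ^ r / (n - 2 * r).factorial) := by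
    rw [show n + 2 - 2 * (r + 1) = n - 2 * r by omega, pow_succ]
    ring
  rw [truncExp2, truncExp2, hrange, sum_range_succ', sum_congr rfl fun r _ => hterm r, ← mul_sum]
  simp only [mul_zero, Nat.sub_zero, pow_zero, mul_one, Nat.factorial_succ, Nat.cast_mul]
  field_simp
  push_cast
  ring

lemma hasDerivAt_truncExp2_succ (n : ℕ) :
    HasDerivAt (truncExp2 (n + 1) · y) ((n + 1) * truncExp2 n x y) x := by
  induction n using Nat.twoStepInduction generalizing x with
  | zero => simpa using hasDerivAt_id' x
  | one =>
    simp only [show 1 + 1 = 0 + 2 from rfl, truncExp2_add_two, truncExp2_zero, truncExp2_one]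
    exact ((hasDerivAt_pow 2 x).add_const _).congr_deriv (by push_cast; ring)
  | more n ih _ =>
    simp only [show n + 2 + 1 = n + 1 + 2 from rfl, truncExp2_add_two (n := n + 1)]
    exact ((hasDerivAt_pow _ x).add ((ih x).const_mul _)).congr_deriv (by
      rw [truncExp2_add_two]; push_cast; ring)

lemma hasDerivAt_truncExp2 (n : ℕ) :
    HasDerivAt (truncExp2 n · y) (n * truncExp2 (n - 1) x y) x := by
  cases n with
  | zero => simpa using hasDerivAt_const x (1 : ℝ)
  | succ n => simpa using hasDerivAt_truncExp2_succ x y n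

lemma deriv_truncExp2 (n : ℕ) :
    deriv (truncExp2 n · y) = fun x => n * truncExp2 (n - 1) x y :=
  funext fun x => (hasDerivAt_truncExp2 x y n).deriv

lemma mul_iteratedDeriv_two_truncExp2 (n : ℕ) :
    y * iteratedDeriv 2 (truncExp2 n · y) x = truncExp2 n x y - x ^ n := by
  rw [iteratedDeriv_succ, iteratedDeriv_one, deriv_truncExp2, deriv_const_mul_field,
    deriv_truncExp2]
  rcases n with _ | _ | n
  · simp
  · simp
  · simp only [truncExp2_add_two, Nat.add_sub_cancel]
    push_cast
    ring

lemma mul_iteratedDeriv_three_truncExp2 (n : ℕ) :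
    y * iteratedDeriv 3 (truncExp2 n · y) x = n * truncExp2 (n - 1) x y - n * x ^ (n - 1) := by
  rw [iteratedDeriv_succ, ← deriv_const_mul_field,
    funext fun x => mul_iteratedDeriv_two_truncExp2 x y n]
  exact ((hasDerivAt_truncExp2 x y n).sub (hasDerivAt_pow n x)).deriv

end

/-- `Z_n = e_n^{(2)}(·,y)` satisfies `yx Z''' - ny Z'' - x Z' + n Z = 0`. -/
theorem truncExp2_ode (n : ℕ) (y x : ℝ) :
    y * x * iteratedDeriv 3 (fun x : ℝ => truncExp2 n x y) x -
      (n : ℝ) * y * iteratedDeriv 2 (fun x : ℝ => truncExp2 n x y) x -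
      x * deriv (fun x : ℝ => truncExp2 n x y) x +
      (n : ℝ) * truncExp2 n x y = 0 := by
  have hpow : (n : ℝ) * (x * x ^ (n - 1)) = n * x ^ n := by
    rcases n with _ | n
    · simp
    · rw [Nat.add_sub_cancel, pow_succ']
  rw [deriv_truncExp2]
  linear_combination x * mul_iteratedDeriv_three_truncExp2 x y n -
    n * mul_iteratedDeriv_two_truncExp2 x y n - hpow
end
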